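/- Let (x, y) be a δ-feasible assignment, let V_0 ⊆ V and let d = max_{a,b ∈ V_0} dist_G(a, b). After performing group shifting on V_0, the resulting assignment (x', y') is (δ + d)-feasible, at most one vertex of V_0 has a fractional y'-value (a value strictly between 0 and 1), and for every v ∈ V \ V_0 we have radius_{(x',y')}(v) ≤ radius_{(x,y)}(v). -/

import Mathlib

/-- The LP relaxation LP1 of the capacitated `k`-center problem, at distance threshold `δ`
(a `δ`-feasible assignment).  `x u v` is the (fractional) amount of client `v` assigned to
center `u`, and `y u` is the (fractional) opening of a center at `u`.  Distances larger
than `δ`, in particular between vertices in different connected components, forbid any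
assignment. -/
def LPFeasible {V : Type} [Fintype V] (G : SimpleGraph V) (L : V → ℕ) (k δ : ℕ)
    (x : V → V → ℝ) (y : V → ℝ) : Prop :=
  (∀ u v, 0 ≤ x u v) ∧ (∀ u, 0 ≤ y u) ∧
  (∑ u, y u = (k : ℝ)) ∧
  (∀ u v, x u v ≤ y u) ∧
  (∀ u, ∑ v, x u v ≤ (L u : ℝ) * y u) ∧
  (∀ v, ∑ u, x u v = 1) ∧
  (∀ u, y u ≤ 1) ∧
  (∀ u v, ¬ (G.Reachable u v ∧ G.dist u v ≤ δ) → x u v = 0)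

/-- A (hard) capacitated `k`-center solution of `G` at distance `δ`: a set `S` of exactly
`k` centers and an assignment `φ` of every vertex to a center of `S` at distance at most
`δ`, such that at most `L u` vertices are assigned to each center `u`. -/
def HasCapSolution {V : Type} (G : SimpleGraph V) (L : V → ℕ) (k δ : ℕ) : Prop :=
  ∃ (S : Finset V) (φ : V → V), S.card = k ∧ (∀ v, φ v ∈ S) ∧
    (∀ v, G.Reachable v (φ v) ∧ G.dist v (φ v) ≤ δ) ∧
    (∀ u ∈ S, {v | φ v = u}.ncard ≤ L u)

/-- `radius_{(x,y)}(u)`: the greatest integer `i` such that some vertex `v` with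
`dist_G(u, v) = i` has `x u v > 0` (and `0` if there is no such `i`). -/
noncomputable def lpRadius {V : Type} (G : SimpleGraph V) (x : V → V → ℝ) (u : V) : ℕ :=
  sSup {i : ℕ | ∃ v, G.dist u v = i ∧ 0 < x u v}

/-- The `x`-part of the result of shifting `α` from `a` to `b`: with `ε = α / y a`,
`x a v` decreases by `ε * x a v` and `x b v` increases by `ε * x a v` for every `v`. -/
noncomputable def shiftX {V : Type} [DecidableEq V] (x : V → V → ℝ) (y : V → ℝ)
    (a b : V) (α : ℝ) : V → V → ℝ :=
  fun u v =>
    if u = a then x a v - (α / y a) * x a v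
    else if u = b then x b v + (α / y a) * x a v
    else x u v

/-- The `y`-part of the result of shifting `α` from `a` to `b`:
`y a` decreases by `α` and `y b` increases by `α`. -/
noncomputable def shiftY {V : Type} [DecidableEq V] (y : V → ℝ) (a b : V) (α : ℝ) :
    V → ℝ :=
  fun u => if u = a then y a - α else if u = b then y b + α else y u

/-- `y v` is fractional: strictly between `0` and `1`. -/
def Frac {V : Type} (y : V → ℝ) (v : V) : Prop := 0 < y v ∧ y v < 1

/-- One step of the group-shifting procedure on `V₀`, whose elements are enumerated as
`vs 0, …, vs (ℓ-1)` in order of non-decreasing capacities: if at least two enumerated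
vertices have fractional `y`-values, let `a` be the smallest and `b` the greatest index of
a vertex with fractional `y`-value, and shift `min (y (vs a)) (1 - y (vs b))` from `vs a`
to `vs b`. -/
def GroupStep {V : Type} [DecidableEq V] {ℓ : ℕ} (vs : Fin ℓ → V)
    (p q : (V → V → ℝ) × (V → ℝ)) : Prop :=
  ∃ a b : Fin ℓ, a < b ∧ Frac p.2 (vs a) ∧ Frac p.2 (vs b) ∧
    (∀ c : Fin ℓ, Frac p.2 (vs c) → a ≤ c ∧ c ≤ b) ∧
    q.1 = shiftX p.1 p.2 (vs a) (vs b) (min (p.2 (vs a)) (1 - p.2 (vs b))) ∧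
    q.2 = shiftY p.2 (vs a) (vs b) (min (p.2 (vs a)) (1 - p.2 (vs b)))

/-! Every step moves weight from the fractional vertex `a` of `V₀` of smallest capacity to the
fractional vertex `b` of largest capacity, scaling the whole row of `a` by one factor, so the
capacity constraint of `b` survives because `L a ≤ L b`. Every client that `b` receives was
served within `δ` by some vertex of `V₀` in the original assignment, hence lies within `δ + d`
of `b`. Each step makes `a` or `b` integral and creates no new fractional vertex, so the
procedure terminates; rows outside `V₀` are never touched, so their radii do not grow. -/

theorem Relation.exists_reflTransGen_of_decreasing {α : Type*} {r : α → α → Prop}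
    {I P : α → Prop} (f : α → ℕ) (h : ∀ p, I p → ¬ P p → ∃ q, r p q ∧ I q ∧ f q < f p)
    {p : α} (hp : I p) : ∃ q, Relation.ReflTransGen r p q ∧ I q ∧ P q := by
  induction hn : f p using Nat.strong_induction_on generalizing p with
  | _ n ih =>
    by_cases hP : P p
    · exact ⟨p, .refl, hp, hP⟩
    obtain ⟨q, hpq, hq, hlt⟩ := h p hp hP
    obtain ⟨s, hqs, hs, hPs⟩ := ih (f q) (hn ▸ hlt) hq rfl
    exact ⟨s, .head hpq hqs, hs, hPs⟩

section Shift

variable {V : Type} [DecidableEq V] {a b u : V} {α : ℝ}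

@[simp]
theorem shiftY_left (y : V → ℝ) : shiftY y a b α a = y a - α := by
  simp [shiftY]

theorem shiftY_right (y : V → ℝ) (hab : a ≠ b) : shiftY y a b α b = y b + α := by
  simp [shiftY, hab.symm]

theorem shiftY_of_ne (y : V → ℝ) (ha : u ≠ a) (hb : u ≠ b) : shiftY y a b α u = y u := by
  simp [shiftY, ha, hb]

theorem shiftY_eq_ite (y : V → ℝ) (hab : a ≠ b) (u : V) :
    shiftY y a b α u = y u - (if u = a then α else 0) + (if u = b then α else 0) := by
  obtain rfl | ha := eq_or_ne u a
  · simp [hab]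
  obtain rfl | hb := eq_or_ne u b
  · simp [shiftY_right y hab, ha]
  · simp [shiftY_of_ne y ha hb, ha, hb]

@[simp]
theorem shiftX_left (x : V → V → ℝ) (y : V → ℝ) (v : V) :
    shiftX x y a b α a v = x a v - α / y a * x a v := by
  simp [shiftX]

theorem shiftX_right (x : V → V → ℝ) (y : V → ℝ) (hab : a ≠ b) (v : V) :
    shiftX x y a b α b v = x b v + α / y a * x a v := by
  simp [shiftX, hab.symm]

theorem shiftX_of_ne (x : V → V → ℝ) (y : V → ℝ) (ha : u ≠ a) (hb : u ≠ b) :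
    shiftX x y a b α u = x u := by
  ext v
  simp [shiftX, ha, hb]

theorem shiftX_eq_ite (x : V → V → ℝ) (y : V → ℝ) (hab : a ≠ b) (u v : V) :
    shiftX x y a b α u v = x u v - (if u = a then α / y a * x a v else 0)
      + (if u = b then α / y a * x a v else 0) := by
  obtain rfl | ha := eq_or_ne u a
  · simp [hab]
  obtain rfl | hb := eq_or_ne u b
  · simp [shiftX_right x y hab, ha]
  · simp [shiftX_of_ne x y ha hb, ha, hb]

theorem shiftX_ne_zero {x : V → V → ℝ} {y : V → ℝ} {v : V} (h : shiftX x y a b α u v ≠ 0) :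
    x u v ≠ 0 ∨ u = b ∧ x a v ≠ 0 := by
  unfold shiftX at h
  split_ifs at h with ha hb
  · subst ha
    exact Or.inl fun h0 => h (by simp [h0])
  · subst hb
    by_contra! h0
    obtain ⟨hb0, ha0⟩ := h0
    exact h (by simp [hb0, ha0 rfl])
  · exact Or.inl h

end Shift

section Radius

variable {V : Type} [Finite V] (G : SimpleGraph V)

theorem lpRadius_mono {x x' : V → V → ℝ} {u : V} (h : ∀ v, 0 < x' u v → 0 < x u v) :
    lpRadius G x' u ≤ lpRadius G x u := by
  refine csSup_le_csSup' ?_ fun i ⟨v, hv, hpos⟩ => ⟨v, hv, h v hpos⟩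
  refine ((Set.finite_range (G.dist u)).subset ?_).bddAbove
  rintro i ⟨v, hv, -⟩
  exact ⟨v, hv⟩

end Radius

section Constraints

variable {V : Type} [Fintype V]

/-- The constraints of `LPFeasible` other than the distance constraint (6). -/
def LPConstraints (L : V → ℕ) (k : ℕ) (x : V → V → ℝ) (y : V → ℝ) : Prop :=
  (∀ u v, 0 ≤ x u v) ∧ (∀ u, 0 ≤ y u) ∧
  (∑ u, y u = (k : ℝ)) ∧
  (∀ u v, x u v ≤ y u) ∧
  (∀ u, ∑ v, x u v ≤ (L u : ℝ) * y u) ∧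
  (∀ v, ∑ u, x u v = 1) ∧
  (∀ u, y u ≤ 1)

theorem lpFeasible_iff {G : SimpleGraph V} {L : V → ℕ} {k δ : ℕ} {x : V → V → ℝ}
    {y : V → ℝ} :
    LPFeasible G L k δ x y ↔ LPConstraints L k x y ∧
      ∀ u v, x u v ≠ 0 → G.Reachable u v ∧ G.dist u v ≤ δ := by
  unfold LPFeasible LPConstraints
  constructor
  · rintro ⟨h₁, h₂, h₃, h₄, h₅, h₆, h₇, h₈⟩
    exact ⟨⟨h₁, h₂, h₃, h₄, h₅, h₆, h₇⟩, fun u v hx => by_contra fun h => hx (h₈ u v h)⟩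
  · rintro ⟨⟨h₁, h₂, h₃, h₄, h₅, h₆, h₇⟩, h₈⟩
    exact ⟨h₁, h₂, h₃, h₄, h₅, h₆, h₇, fun u v h => by_contra fun hx => h (h₈ u v hx)⟩

variable [DecidableEq V] {L : V → ℕ} {k : ℕ} {x : V → V → ℝ} {y : V → ℝ} {a b : V} {α : ℝ}

theorem sum_shiftX_left_le (hα : 0 < α) (hαa : α ≤ y a) (hcap : ∑ v, x a v ≤ L a * y a) :
    ∑ v, shiftX x y a b α a v ≤ L a * shiftY y a b α a := by
  have hya : 0 < y a := hα.trans_le hαa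
  calc ∑ v, shiftX x y a b α a v = (1 - α / y a) * ∑ v, x a v := by
        rw [Finset.mul_sum]
        exact Finset.sum_congr rfl fun v _ => by rw [shiftX_left]; ring
    _ ≤ (1 - α / y a) * (L a * y a) :=
        mul_le_mul_of_nonneg_left hcap (sub_nonneg.2 ((div_le_one hya).2 hαa))
    _ = L a * shiftY y a b α a := by rw [shiftY_left]; field_simp

theorem sum_shiftX_right_le (hab : a ≠ b) (hL : L a ≤ L b) (hα : 0 < α) (hαa : α ≤ y a)
    (hcapa : ∑ v, x a v ≤ L a * y a) (hcapb : ∑ v, x b v ≤ L b * y b) :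
    ∑ v, shiftX x y a b α b v ≤ L b * shiftY y a b α b := by
  have hLab : (L a : ℝ) ≤ L b := Nat.cast_le.2 hL
  have hε0 : 0 ≤ α / y a := div_nonneg hα.le (hα.le.trans hαa)
  calc ∑ v, shiftX x y a b α b v = ∑ v, x b v + α / y a * ∑ v, x a v := by
        rw [Finset.mul_sum, ← Finset.sum_add_distrib]
        exact Finset.sum_congr rfl fun v _ => shiftX_right x y hab v
    _ ≤ L b * y b + α / y a * (L a * y a) := by gcongr
    _ = L b * y b + L a * α := by rw [mul_left_comm, div_mul_cancel₀ α (hα.trans_le hαa).ne']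
    _ ≤ L b * shiftY y a b α b := by
        rw [shiftY_right y hab]; nlinarith [mul_le_mul_of_nonneg_right hLab hα.le]

theorem LPConstraints.shift (h : LPConstraints L k x y) (hab : a ≠ b) (hL : L a ≤ L b)
    (hα : 0 < α) (hαa : α ≤ y a) (hαb : α ≤ 1 - y b) :
    LPConstraints L k (shiftX x y a b α) (shiftY y a b α) := by
  obtain ⟨hx0, hy0, hyk, hxy, hcap, hcol, hy1⟩ := h
  have hya : 0 < y a := hα.trans_le hαa
  have hε0 : 0 ≤ α / y a := by positivity
  have hε1 : α / y a ≤ 1 := (div_le_one hya).2 hαa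
  have hεy : α / y a * y a = α := div_mul_cancel₀ α hya.ne'
  refine ⟨fun u v => ?_, fun u => ?_, ?_, fun u v => ?_, fun u => ?_, fun v => ?_, fun u => ?_⟩
  · obtain rfl | ha := eq_or_ne u a
    · rw [shiftX_left]; nlinarith [mul_nonneg (sub_nonneg.2 hε1) (hx0 u v)]
    obtain rfl | hb := eq_or_ne u b
    · rw [shiftX_right x y hab]; nlinarith [hx0 u v, hx0 a v]
    · rw [shiftX_of_ne x y ha hb]; exact hx0 u v
  · obtain rfl | ha := eq_or_ne u a
    · simp only [shiftY_left]; linarith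
    obtain rfl | hb := eq_or_ne u b
    · rw [shiftY_right y hab]; linarith [hy0 u]
    · rw [shiftY_of_ne y ha hb]; exact hy0 u
  · simp [shiftY_eq_ite y hab, Finset.sum_add_distrib, Finset.sum_sub_distrib, hyk]
  · obtain rfl | ha := eq_or_ne u a
    · simp only [shiftX_left, shiftY_left]; nlinarith [hxy u v]
    obtain rfl | hb := eq_or_ne u b
    · rw [shiftX_right x y hab, shiftY_right y hab]; nlinarith [hxy u v, hxy a v]
    · rw [shiftX_of_ne x y ha hb, shiftY_of_ne y ha hb]; exact hxy u v
  · obtain rfl | ha := eq_or_ne u a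
    · exact sum_shiftX_left_le hα hαa (hcap u)
    obtain rfl | hb := eq_or_ne u b
    · exact sum_shiftX_right_le hab hL hα hαa (hcap a) (hcap u)
    · rw [shiftX_of_ne x y ha hb, shiftY_of_ne y ha hb]; exact hcap u
  · simp [shiftX_eq_ite x y hab, Finset.sum_add_distrib, Finset.sum_sub_distrib, hcol]
  · obtain rfl | ha := eq_or_ne u a
    · simp only [shiftY_left]; linarith [hy1 u]
    obtain rfl | hb := eq_or_ne u b
    · rw [shiftY_right y hab]; linarith
    · rw [shiftY_of_ne y ha hb]; exact hy1 u

end Constraints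

section Support

variable {V : Type} (V₀ : Finset V)

def SupportShiftedWithin (x x' : V → V → ℝ) : Prop :=
  ∀ u v, x' u v ≠ 0 → ∃ w, (w = u ∨ u ∈ V₀ ∧ w ∈ V₀) ∧ x w v ≠ 0

variable {V₀}

theorem SupportShiftedWithin.refl (x : V → V → ℝ) : SupportShiftedWithin V₀ x x :=
  fun u _ hx => ⟨u, Or.inl rfl, hx⟩

theorem SupportShiftedWithin.shiftX [DecidableEq V] {x x' : V → V → ℝ} {y : V → ℝ} {a b : V}
    {α : ℝ} (h : SupportShiftedWithin V₀ x x') (ha : a ∈ V₀) (hb : b ∈ V₀) :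
    SupportShiftedWithin V₀ x (shiftX x' y a b α) := by
  intro u v hu
  rcases shiftX_ne_zero hu with hu | ⟨rfl, hav⟩
  · exact h u v hu
  obtain ⟨w, hw, hwv⟩ := h a v hav
  refine ⟨w, Or.inr ⟨hb, ?_⟩, hwv⟩
  rcases hw with rfl | ⟨-, hw⟩
  exacts [ha, hw]

theorem SupportShiftedWithin.ne_zero_of_notMem {x x' : V → V → ℝ} {u v : V}
    (h : SupportShiftedWithin V₀ x x') (hu : u ∉ V₀) (hx' : x' u v ≠ 0) : x u v ≠ 0 := by
  obtain ⟨w, rfl | ⟨hu', -⟩, hwv⟩ := h u v hx'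
  exacts [hwv, absurd hu' hu]

theorem LPFeasible.of_supportShiftedWithin [Fintype V] {G : SimpleGraph V} {L : V → ℕ}
    {k δ d : ℕ} {x x' : V → V → ℝ} {y y' : V → ℝ} (hfeas : LPFeasible G L k δ x y)
    (hG : G.Connected) (hd : ∀ a ∈ V₀, ∀ b ∈ V₀, G.dist a b ≤ d)
    (hsupp : SupportShiftedWithin V₀ x x') (hc : LPConstraints L k x' y') :
    LPFeasible G L k (δ + d) x' y' := by
  refine lpFeasible_iff.2 ⟨hc, fun u v huv => ⟨hG.preconnected u v, ?_⟩⟩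
  obtain ⟨w, hw, hwv⟩ := hsupp u v huv
  have hwδ : G.dist w v ≤ δ := ((lpFeasible_iff.1 hfeas).2 w v hwv).2
  rcases hw with rfl | ⟨hu, hw⟩
  · omega
  · calc G.dist u v ≤ G.dist u w + G.dist w v := hG.dist_triangle
      _ ≤ δ + d := by have := hd u hu w hw; omega

end Support

section GroupShifting

variable {V : Type} {ℓ : ℕ} {vs : Fin ℓ → V}

open Classical in
noncomputable def fracIndices (vs : Fin ℓ → V) (y : V → ℝ) : Finset (Fin ℓ) :=
  {c | Frac y (vs c)}

@[simp]
theorem mem_fracIndices {y : V → ℝ} {c : Fin ℓ} : c ∈ fracIndices vs y ↔ Frac y (vs c) := by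
  simp [fracIndices]

variable [DecidableEq V]

theorem exists_groupStep (p : (V → V → ℝ) × (V → ℝ)) (h : 1 < (fracIndices vs p.2).card) :
    ∃ q, GroupStep vs p q := by
  have hne : (fracIndices vs p.2).Nonempty := Finset.card_pos.1 (by omega)
  refine ⟨(_, _), _, _, Finset.min'_lt_max'_of_card _ h, mem_fracIndices.1 (Finset.min'_mem _ hne),
    mem_fracIndices.1 (Finset.max'_mem _ hne), fun c hc => ?_, rfl, rfl⟩
  rw [← mem_fracIndices] at hc
  exact ⟨Finset.min'_le _ c hc, Finset.le_max' _ c hc⟩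

variable {p q : (V → V → ℝ) × (V → ℝ)}

theorem GroupStep.lpConstraints [Fintype V] {L : V → ℕ} {k : ℕ} (hstep : GroupStep vs p q)
    (hinj : Function.Injective vs) (hmono : Monotone fun i => L (vs i))
    (hp : LPConstraints L k p.1 p.2) : LPConstraints L k q.1 q.2 := by
  obtain ⟨i, j, hij, ⟨hi0, -⟩, ⟨-, hj1⟩, -, hq₁, hq₂⟩ := hstep
  rw [hq₁, hq₂]
  exact hp.shift (hinj.ne hij.ne) (hmono hij.le) (lt_min hi0 (by linarith)) (min_le_left _ _)
    (min_le_right _ _)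

theorem GroupStep.supportShiftedWithin {V₀ : Finset V} {x : V → V → ℝ} (hstep : GroupStep vs p q)
    (hvs : ∀ i, vs i ∈ V₀) (hp : SupportShiftedWithin V₀ x p.1) :
    SupportShiftedWithin V₀ x q.1 := by
  obtain ⟨i, j, -, -, -, -, hq₁, -⟩ := hstep
  rw [hq₁]
  exact hp.shiftX (hvs i) (hvs j)

theorem GroupStep.fracIndices_ssubset (hstep : GroupStep vs p q) (hinj : Function.Injective vs) :
    fracIndices vs q.2 ⊂ fracIndices vs p.2 := by
  obtain ⟨i, j, hij, hi, hj, -, -, hq₂⟩ := hstep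
  have hab : vs i ≠ vs j := hinj.ne hij.ne
  refine (Finset.ssubset_iff_of_subset fun c hc => ?_).2 ?_
  · rw [mem_fracIndices] at hc ⊢
    obtain rfl | hci := eq_or_ne c i
    · exact hi
    obtain rfl | hcj := eq_or_ne c j
    · exact hj
    rwa [hq₂, Frac, shiftY_of_ne _ (hinj.ne hci) (hinj.ne hcj)] at hc
  -- the shifted amount empties `vs i` or fills `vs j`
  rcases min_choice (p.2 (vs i)) (1 - p.2 (vs j)) with hmin | hmin
  · refine ⟨i, mem_fracIndices.2 hi, fun hc => ?_⟩
    have := (mem_fracIndices.1 hc).1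
    rw [hq₂, hmin, shiftY_left, sub_self] at this
    exact this.false
  · refine ⟨j, mem_fracIndices.2 hj, fun hc => ?_⟩
    have := (mem_fracIndices.1 hc).2
    rw [hq₂, hmin, shiftY_right _ hab, add_sub_cancel] at this
    exact this.false

end GroupShifting

theorem group_shifting_lemma_general {V : Type} [Fintype V] [DecidableEq V] (G : SimpleGraph V)
    (hG : G.Connected) (L : V → ℕ) (k δ : ℕ)
    (x : V → V → ℝ) (y : V → ℝ) (hfeas : LPFeasible G L k δ x y)
    (V₀ : Finset V) {ℓ : ℕ} (vs : Fin ℓ → V) (hinj : Function.Injective vs)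
    (hrange : ∀ v, v ∈ V₀ ↔ ∃ i, vs i = v)
    (hmono : Monotone fun i => L (vs i))
    (d : ℕ) (hd : ∀ a ∈ V₀, ∀ b ∈ V₀, G.dist a b ≤ d) :
    ∃ p' : (V → V → ℝ) × (V → ℝ),
      Relation.ReflTransGen (GroupStep vs) (x, y) p' ∧
      LPFeasible G L k (δ + d) p'.1 p'.2 ∧
      (∀ u ∈ V₀, ∀ v ∈ V₀, Frac p'.2 u → Frac p'.2 v → u = v) ∧
      (∀ v ∉ V₀, lpRadius G p'.1 v ≤ lpRadius G x v) := by
  have hvs (i : Fin ℓ) : vs i ∈ V₀ := (hrange _).2 ⟨i, rfl⟩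
  have hcore := (lpFeasible_iff.1 hfeas).1
  obtain ⟨p', hreach, ⟨hcore', hsupp⟩, hone⟩ :=
    Relation.exists_reflTransGen_of_decreasing (r := GroupStep vs)
      (I := fun p => LPConstraints L k p.1 p.2 ∧ SupportShiftedWithin V₀ x p.1)
      (P := fun p => (fracIndices vs p.2).card ≤ 1) (fun p => (fracIndices vs p.2).card)
      (fun p ⟨hc, hs⟩ hP => by
        obtain ⟨q, hq⟩ := exists_groupStep p (not_le.1 hP)
        exact ⟨q, hq, ⟨hq.lpConstraints hinj hmono hc, hq.supportShiftedWithin hvs hs⟩,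
          Finset.card_lt_card (hq.fracIndices_ssubset hinj)⟩)
      (p := (x, y)) ⟨hcore, .refl x⟩
  refine ⟨p', hreach, hfeas.of_supportShiftedWithin hG hd hsupp hcore', ?_, fun v hv => ?_⟩
  · intro u hu w hw hfu hfw
    obtain ⟨i, rfl⟩ := (hrange u).1 hu
    obtain ⟨j, rfl⟩ := (hrange w).1 hw
    rw [Finset.card_le_one.1 hone i (mem_fracIndices.2 hfu) j (mem_fracIndices.2 hfw)]
  · exact lpRadius_mono G fun w hpos =>
      (hcore.1 v w).lt_of_ne' (hsupp.ne_zero_of_notMem hv hpos.ne')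

/-- **Lemma 2, group shifting.** Let `(x, y)` be a `δ`-feasible assignment,
let `V₀ ⊆ V` be enumerated as `vs 0, …, vs (ℓ-1)` with non-decreasing capacities and let
`d` bound the pairwise distances in `V₀`.  Group shifting on `V₀` terminates, i.e. some
assignment `(x', y')` with at most one fractional `y'`-value on `V₀` is reachable from
`(x, y)` by group-shifting steps, and any such `(x', y')` obtained by the procedure is
`(δ + d)`-feasible, has at most one vertex of `V₀` with fractional `y'`-value, and
satisfies `radius_{(x',y')}(v) ≤ radius_{(x,y)}(v)` for every `v ∈ V ∖ V₀`. -/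
theorem group_shifting_lemma {V : Type} [Fintype V] [DecidableEq V] (G : SimpleGraph V)
    (hG : G.Connected) (L : V → ℕ) (k δ : ℕ) (hδ : 0 < δ)
    (x : V → V → ℝ) (y : V → ℝ) (hfeas : LPFeasible G L k δ x y)
    (V₀ : Finset V) {ℓ : ℕ} (vs : Fin ℓ → V) (hinj : Function.Injective vs)
    (hrange : ∀ v, v ∈ V₀ ↔ ∃ i, vs i = v)
    (hmono : Monotone fun i => L (vs i))
    (d : ℕ) (hd : ∀ a ∈ V₀, ∀ b ∈ V₀, G.dist a b ≤ d) :
    ∃ p' : (V → V → ℝ) × (V → ℝ),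
      Relation.ReflTransGen (GroupStep vs) (x, y) p' ∧
      LPFeasible G L k (δ + d) p'.1 p'.2 ∧
      (∀ u ∈ V₀, ∀ v ∈ V₀, Frac p'.2 u → Frac p'.2 v → u = v) ∧
      (∀ v ∉ V₀, lpRadius G p'.1 v ≤ lpRadius G x v) :=
  group_shifting_lemma_general G hG L k δ x y hfeas V₀ vs hinj hrange hmono d hd
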